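/- Let (K, K^∨) be a pair of dual reflexive Gorenstein cones. Then the set of lattice points in the topological interior of K^∨ equals deg^∨ + (K^∨ ∩ {lattice points}); that is, a lattice point p lies in the interior of K^∨ if and only if p − deg^∨ ∈ K^∨. -/

import Mathlib

/-!
A Gorenstein cone `K` is cut out, dually, by its generators: `y ∈ K^∨` iff `⟨v, y⟩ ≥ 0` for every
generator `v`, and `y` lies in the interior of `K^∨` iff all these inequalities are strict
(pushing `y` slightly towards `-v` must keep it in `K^∨`). For a lattice point `p` and a lattice
generator `v`, the integer `⟨v, p⟩` is positive iff it is at least `1 = ⟨v, deg^∨⟩`, i.e. iff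
`⟨v, p - deg^∨⟩ ≥ 0`.
-/

open scoped BigOperators Pointwise

noncomputable section

/-- The standard pairing `⟨x, y⟩ = ∑ i, x i * y i` on `ℝ^d`. -/
def pairR {d : ℕ} (x y : Fin d → ℝ) : ℝ := ∑ i, x i * y i

/-- A point of `ℝ^d` is a lattice point if all of its coordinates are integers. -/
def IsLatticePoint {d : ℕ} (x : Fin d → ℝ) : Prop := ∀ i, ∃ z : ℤ, x i = (z : ℝ)

/-- The dual cone `K^∨ = {y : ⟨x, y⟩ ≥ 0 for all x ∈ K}`. -/
def dualCone {d : ℕ} (K : Set (Fin d → ℝ)) : Set (Fin d → ℝ) :=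
  { y | ∀ x ∈ K, 0 ≤ pairR x y }

/-- A Gorenstein cone with degree element `n` (a lattice point): the set of all
nonnegative real linear combinations of a finite set of lattice points, each pairing
to `1` with `n`, such that `K ∩ (−K) = {0}` and `span K = ℝ^d`. -/
def IsGorensteinCone {d : ℕ} (K : Set (Fin d → ℝ)) (n : Fin d → ℝ) : Prop :=
  IsLatticePoint n ∧
  (∃ S : Finset (Fin d → ℝ),
      (∀ v ∈ S, IsLatticePoint v ∧ pairR v n = 1) ∧
      K = { x | ∃ c : (Fin d → ℝ) → ℝ, (∀ v, 0 ≤ c v) ∧ x = ∑ v ∈ S, c v • v }) ∧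
  K ∩ (-K) = {0} ∧
  Submodule.span ℝ K = ⊤

/-- `K_(1)`: the lattice points `m ∈ K` with `⟨m, deg^∨⟩ = 1`. -/
def Kone {d : ℕ} (K : Set (Fin d → ℝ)) (degVee : Fin d → ℝ) : Set (Fin d → ℝ) :=
  { m | IsLatticePoint m ∧ m ∈ K ∧ pairR m degVee = 1 }

/-- `K^∨_(1)`: the lattice points `n ∈ K^∨` with `⟨deg, n⟩ = 1`. -/
def KvOne {d : ℕ} (K : Set (Fin d → ℝ)) (deg : Fin d → ℝ) : Set (Fin d → ℝ) :=
  { n | IsLatticePoint n ∧ n ∈ dualCone K ∧ pairR deg n = 1 }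

open Filter Topology

section

variable {d : ℕ}

/-- Definitionally the cone spanned by `S` in `IsGorensteinCone`. -/
def finsetCone (S : Finset (Fin d → ℝ)) : Set (Fin d → ℝ) :=
  { x | ∃ c : (Fin d → ℝ) → ℝ, (∀ v, 0 ≤ c v) ∧ x = ∑ v ∈ S, c v • v }

theorem pairR_eq_dotProduct (x y : Fin d → ℝ) : pairR x y = x ⬝ᵥ y := rfl

theorem pairR_sub_right (x y z : Fin d → ℝ) : pairR x (y - z) = pairR x y - pairR x z :=
  dotProduct_sub x y z

theorem pairR_smul_right (c : ℝ) (x y : Fin d → ℝ) : pairR x (c • y) = c * pairR x y :=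
  dotProduct_smul c x y

theorem continuous_pairR (v : Fin d → ℝ) : Continuous (pairR v) := by
  unfold pairR
  fun_prop

theorem pairR_self_pos {v : Fin d → ℝ} (hv : v ≠ 0) : 0 < pairR v v := by
  simpa [pairR_eq_dotProduct] using Matrix.dotProduct_self_star_pos_iff.mpr hv

theorem exists_pairR_eq_intCast {x y : Fin d → ℝ} (hx : IsLatticePoint x)
    (hy : IsLatticePoint y) : ∃ N : ℤ, pairR x y = N := by
  choose zx hzx using hx
  choose zy hzy using hy
  exact ⟨∑ i, zx i * zy i, by simp [pairR, hzx, hzy]⟩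

theorem pairR_pos_iff_one_le {x y : Fin d → ℝ} (hx : IsLatticePoint x)
    (hy : IsLatticePoint y) : 0 < pairR x y ↔ 1 ≤ pairR x y := by
  obtain ⟨N, hN⟩ := exists_pairR_eq_intCast hx hy
  rw [hN]
  exact_mod_cast Int.lt_iff_add_one_le

theorem mem_finsetCone_of_mem {S : Finset (Fin d → ℝ)} {v : Fin d → ℝ} (hv : v ∈ S) :
    v ∈ finsetCone S :=
  ⟨Pi.single v 1, fun w => by by_cases h : w = v <;> simp [h],
    by simp [Pi.single_apply, ite_smul, hv]⟩

theorem mem_dualCone_finsetCone_iff {S : Finset (Fin d → ℝ)} {y : Fin d → ℝ} :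
    y ∈ dualCone (finsetCone S) ↔ ∀ v ∈ S, 0 ≤ pairR v y := by
  refine ⟨fun hy v hv => hy v (mem_finsetCone_of_mem hv), ?_⟩
  rintro hS x ⟨c, hc, rfl⟩
  simp only [pairR_eq_dotProduct, sum_dotProduct, smul_dotProduct, smul_eq_mul] at hS ⊢
  exact Finset.sum_nonneg fun v hv => mul_nonneg (hc v) (hS v hv)

theorem mem_interior_dualCone_finsetCone_iff {S : Finset (Fin d → ℝ)} (hS : 0 ∉ S)
    {y : Fin d → ℝ} : y ∈ interior (dualCone (finsetCone S)) ↔ ∀ v ∈ S, 0 < pairR v y := by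
  constructor
  · intro hy v hv
    have hpush : ∀ᶠ t in 𝓝[>] (0 : ℝ), y - t • v ∈ dualCone (finsetCone S) := by
      have hcont : Continuous fun t : ℝ => y - t • v := by fun_prop
      exact (hcont.tendsto' 0 y (by simp)).mono_left nhdsWithin_le_nhds
        |>.eventually (mem_interior_iff_mem_nhds.mp hy)
    obtain ⟨t, hty, ht⟩ := (hpush.and self_mem_nhdsWithin).exists
    have hle := mem_dualCone_finsetCone_iff.mp hty v hv
    rw [pairR_sub_right, pairR_smul_right] at hle
    have := mul_pos (Set.mem_Ioi.mp ht) (pairR_self_pos (ne_of_mem_of_not_mem hv hS))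
    linarith
  · intro hy
    have hopen : IsOpen (⋂ v ∈ S, { z : Fin d → ℝ | 0 < pairR v z }) :=
      isOpen_biInter_finset fun v _ => isOpen_lt continuous_const (continuous_pairR v)
    refine interior_maximal (fun z hz => ?_) hopen (Set.mem_iInter₂.mpr hy)
    exact mem_dualCone_finsetCone_iff.mpr fun v hv => (Set.mem_iInter₂.mp hz v hv).le

end

theorem stmt7_general {d : ℕ} (K : Set (Fin d → ℝ)) (degVee : Fin d → ℝ)
    (hK : IsGorensteinCone K degVee)
    (p : Fin d → ℝ) (hp : IsLatticePoint p) :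
    p ∈ interior (dualCone K) ↔ p - degVee ∈ dualCone K := by
  obtain ⟨-, ⟨S, hS, rfl⟩, -, -⟩ := hK
  have hS0 : (0 : Fin d → ℝ) ∉ S := fun h0 => by simpa [pairR] using (hS 0 h0).2
  change p ∈ interior (dualCone (finsetCone S)) ↔ p - degVee ∈ dualCone (finsetCone S)
  rw [mem_interior_dualCone_finsetCone_iff hS0, mem_dualCone_finsetCone_iff]
  refine forall₂_congr fun v hv => ?_
  rw [pairR_sub_right, (hS v hv).2, sub_nonneg]
  exact pairR_pos_iff_one_le (hS v hv).1 hp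

/-- For a pair of dual reflexive Gorenstein cones `(K, K^∨)`, a lattice
point `p` lies in the topological interior of `K^∨` if and only if `p − deg^∨ ∈ K^∨`. -/
theorem stmt7 {d : ℕ} (K : Set (Fin d → ℝ)) (deg degVee : Fin d → ℝ)
    (hK : IsGorensteinCone K degVee) (hKv : IsGorensteinCone (dualCone K) deg)
    (p : Fin d → ℝ) (hp : IsLatticePoint p) :
    p ∈ interior (dualCone K) ↔ p - degVee ∈ dualCone K :=
  stmt7_general K degVee hK p hp
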